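/- arXiv:1905.13289 — 3 statements merged into one kernel-verified Lean document; each statement's English description precedes it below -/
import Mathlib

section
/- If A and B are symmetric positive semidefinite d×d real matrices with B ⪯ A, and λ > 0, then all eigenvalues of (A + λI)^{-1/2} B (A + λI)^{-1/2} lie in the interval [0, σ/(σ+λ)], where σ is the largest eigenvalue of A. -/
/-!
Write `P = A + λI` and `c = σ/(σ+λ)`. In the Loewner order `0 ≤ B ≤ A ≤ σI`, and
`cP - A = (λ/(σ+λ))(σI - A) ≥ 0`, so `0 ≤ B ≤ cP`. Conjugating by the positive matrix
`P^{-1/2}` preserves the order and sends `P` to `I`, hence `0 ≤ P^{-1/2} B P^{-1/2} ≤ cI`,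
which confines its spectrum to `[0, c]`.
-/

open Matrix

section

open scoped ComplexOrder

/-- The positive semidefinite square root of a positive semidefinite matrix
(the definition `Matrix.PosSemidef.sqrt` of the older Mathlib, since removed). -/
noncomputable def Matrix.PosSemidef.sqrt {n 𝕜 : Type*} [Fintype n] [DecidableEq n] [RCLike 𝕜]
    {A : Matrix n n 𝕜} (hA : A.PosSemidef) : Matrix n n 𝕜 :=
  hA.1.eigenvectorUnitary.1 * diagonal ((↑) ∘ (√·) ∘ hA.1.eigenvalues) *
  (star hA.1.eigenvectorUnitary : Matrix n n 𝕜)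

end

open scoped MatrixOrder ComplexOrder

lemma le_smul_add_smul_one {E : Type*} [AddCommGroup E] [PartialOrder E] [IsOrderedAddMonoid E]
    [Module ℝ E] [PosSMulMono ℝ E] [One E] {a : E} {σ l : ℝ} (ha : a ≤ σ • 1) (hl : 0 ≤ l)
    (hσl : 0 < σ + l) : a ≤ (σ / (σ + l)) • (a + l • 1) := by
  have key : (σ / (σ + l)) • (a + l • 1) - a = (l / (σ + l)) • (σ • 1 - a) := by
    match_scalars
    · field_simp
      ring
    · ring
  have := smul_nonneg (div_nonneg hl hσl.le) (sub_nonneg.mpr ha)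
  rwa [← key, sub_nonneg] at this

namespace Matrix

variable {n 𝕜 : Type*} [Fintype n] [DecidableEq n] [RCLike 𝕜]

lemma PosSemidef.sqrt_eq_cfcSqrt {A : Matrix n n 𝕜} (hA : A.PosSemidef) :
    hA.sqrt = CFC.sqrt A := by
  rw [CFC.sqrt_eq_real_sqrt A hA.nonneg, cfcₙ_eq_cfc, hA.1.cfc_eq]
  rfl

lemma spectrum_subset_Icc_of_nonneg_of_le_smul_one {M : Matrix n n 𝕜} {c : ℝ} (h0 : 0 ≤ M)
    (hc : M ≤ c • 1) : spectrum ℝ M ⊆ Set.Icc 0 c := by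
  rw [← Algebra.algebraMap_eq_smul_one, le_algebraMap_iff_spectrum_le] at hc
  exact fun μ hμ => ⟨spectrum_nonneg_of_nonneg h0 hμ, hc μ hμ⟩

lemma inv_sqrt_mul_mul_inv_sqrt {P : Matrix n n 𝕜} (hP : 0 ≤ P) (hPu : IsUnit P) :
    (CFC.sqrt P)⁻¹ * P * (CFC.sqrt P)⁻¹ = 1 := by
  have hS : IsUnit (CFC.sqrt P).det :=
    (isUnit_iff_isUnit_det _).mp ((CFC.isUnit_sqrt_iff P).mpr hPu)
  have hSS : CFC.sqrt P * CFC.sqrt P = P := CFC.sqrt_mul_sqrt_self P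
  set S := CFC.sqrt P
  rw [← hSS, ← mul_assoc, nonsing_inv_mul _ hS, one_mul, mul_nonsing_inv _ hS]

lemma spectrum_inv_sqrt_mul_mul_inv_sqrt_subset_Icc {P B : Matrix n n 𝕜} {c : ℝ} (hP : 0 ≤ P)
    (hPu : IsUnit P) (hB : 0 ≤ B) (hBP : B ≤ c • P) :
    spectrum ℝ ((CFC.sqrt P)⁻¹ * B * (CFC.sqrt P)⁻¹) ⊆ Set.Icc 0 c := by
  have hT : 0 ≤ (CFC.sqrt P)⁻¹ :=
    nonneg_iff_posSemidef.mpr (nonneg_iff_posSemidef.mp (CFC.sqrt_nonneg P)).inv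
  refine spectrum_subset_Icc_of_nonneg_of_le_smul_one (conjugate_nonneg_of_nonneg hB hT) ?_
  calc (CFC.sqrt P)⁻¹ * B * (CFC.sqrt P)⁻¹ ≤ (CFC.sqrt P)⁻¹ * (c • P) * (CFC.sqrt P)⁻¹ :=
        conjugate_le_conjugate_of_nonneg hBP hT
    _ = c • 1 := by rw [mul_smul_comm, smul_mul_assoc, inv_sqrt_mul_mul_inv_sqrt hP hPu]

end Matrix

theorem stmt0_general (d : ℕ) (A B : Matrix (Fin d) (Fin d) ℝ) (l σ : ℝ)
    (hB : B.PosSemidef) (hAB : (A - B).PosSemidef)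
    (hl : 0 < l)
    (hP : (A + l • (1 : Matrix (Fin d) (Fin d) ℝ)).PosSemidef)
    (hσ_mem : σ ∈ spectrum ℝ A) (hσ_max : ∀ μ ∈ spectrum ℝ A, μ ≤ σ) :
    ∀ μ ∈ spectrum ℝ (hP.sqrt⁻¹ * B * hP.sqrt⁻¹), μ ∈ Set.Icc (0 : ℝ) (σ / (σ + l)) := by
  have hBA : B ≤ A := Matrix.le_iff.mpr hAB
  have hA : 0 ≤ A := hB.nonneg.trans hBA
  have hσ : 0 ≤ σ := spectrum_nonneg_of_nonneg hA hσ_mem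
  have hAσ : A ≤ σ • 1 := by
    rw [← Algebra.algebraMap_eq_smul_one]
    exact le_algebraMap_of_spectrum_le hσ_max (IsSelfAdjoint.of_nonneg hA)
  have hPu : IsUnit (A + l • 1) :=
    (Matrix.PosDef.posSemidef_add (Matrix.nonneg_iff_posSemidef.mp hA) (.smul .one hl)).isUnit
  rw [hP.sqrt_eq_cfcSqrt]
  exact Matrix.spectrum_inv_sqrt_mul_mul_inv_sqrt_subset_Icc hP.nonneg hPu hB.nonneg
    (hBA.trans (le_smul_add_smul_one hAσ hl.le (by linarith)))

/-- If `A, B` are symmetric PSD `d×d` real matrices with `B ⪯ A` and `λ > 0`, then all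
eigenvalues of `(A + λI)⁻¹ᐟ² B (A + λI)⁻¹ᐟ²` lie in `[0, σ/(σ+λ)]`, where `σ` is the
largest eigenvalue of `A`. -/
theorem stmt0 (d : ℕ) (A B : Matrix (Fin d) (Fin d) ℝ) (l σ : ℝ)
    (hA : A.IsSymm) (hB : B.PosSemidef) (hAB : (A - B).PosSemidef)
    (hl : 0 < l)
    (hP : (A + l • (1 : Matrix (Fin d) (Fin d) ℝ)).PosSemidef)
    (hσ_mem : σ ∈ spectrum ℝ A) (hσ_max : ∀ μ ∈ spectrum ℝ A, μ ≤ σ) :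
    ∀ μ ∈ spectrum ℝ (hP.sqrt⁻¹ * B * hP.sqrt⁻¹), μ ∈ Set.Icc (0 : ℝ) (σ / (σ + l)) :=
  stmt0_general d A B l σ hB hAB hl hP hσ_mem hσ_max
end

section
/- Let H be symmetric positive semidefinite with largest eigenvalue σ_max, λ > 0, H_λ = H + λI, and suppose H_w = α x xᵀ with α ≥ 0, x ∈ ℝ^d, and H_w ⪯ H. Then α xᵀ H_λ^{-1} x ≤ σ_max/(σ_max + λ), and consequently 1/(1 − α xᵀ H_λ^{-1} x) ≤ 1 + σ_max/λ. -/
/-!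
Put `y = H_λ⁻¹ x`, so that `a := xᵀ H_λ⁻¹ x = yᵀ H y + λ |y|²`. Testing `α x xᵀ ⪯ H` against `y`
gives `α a² ≤ yᵀ H y`, and `yᵀ H y ≤ σ_max |y|²`. Hence
`α a² (σ_max + λ) ≤ (σ_max + λ) yᵀ H y ≤ σ_max a`, which is the first bound after dividing by `a`;
the second bound is a rearrangement of the first.
-/

open Matrix

namespace Matrix

variable {n : Type*} [Fintype n]

theorem mul_sq_dotProduct_le_of_posSemidef_sub_vecMulVec {H : Matrix n n ℝ} {x : n → ℝ} {α : ℝ}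
    (h : (H - α • vecMulVec x x).PosSemidef) (y : n → ℝ) :
    α * (x ⬝ᵥ y) ^ 2 ≤ y ⬝ᵥ (H *ᵥ y) := by
  have h := h.dotProduct_mulVec_nonneg y
  rw [star_trivial, sub_mulVec, dotProduct_sub, smul_mulVec, vecMulVec_mulVec] at h
  simp only [dotProduct_smul, MulOpposite.smul_eq_mul_unop, MulOpposite.unop_op, smul_eq_mul,
    dotProduct_comm y x] at h
  nlinarith

variable [DecidableEq n]

theorem IsHermitian.posSemidef_smul_one_sub {H : Matrix n n ℝ}
    (hH : H.IsHermitian) {σ : ℝ} (hσ : ∀ μ ∈ spectrum ℝ H, μ ≤ σ) :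
    (σ • (1 : Matrix n n ℝ) - H).PosSemidef := by
  refine posSemidef_iff_isHermitian_and_spectrum_nonneg.2 ⟨?_, ?_⟩
  · exact (isHermitian_one.smul (.all σ)).sub hH
  · rw [← Algebra.algebraMap_eq_smul_one, ← spectrum.singleton_sub_eq]
    rintro _ ⟨_, rfl, μ, hμ, rfl⟩
    exact sub_nonneg.2 (hσ μ hμ)

theorem IsHermitian.dotProduct_mulVec_le_of_spectrum_le {H : Matrix n n ℝ} (hH : H.IsHermitian)
    {σ : ℝ} (hσ : ∀ μ ∈ spectrum ℝ H, μ ≤ σ) (y : n → ℝ) :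
    y ⬝ᵥ (H *ᵥ y) ≤ σ * (y ⬝ᵥ y) := by
  have h := (hH.posSemidef_smul_one_sub hσ).dotProduct_mulVec_nonneg y
  rw [star_trivial, sub_mulVec, dotProduct_sub, smul_mulVec, one_mulVec, dotProduct_smul,
    smul_eq_mul] at h
  linarith

theorem dotProduct_eq_of_add_smul_one_mulVec_eq {H : Matrix n n ℝ} {l : ℝ} {x y : n → ℝ}
    (hy : (H + l • (1 : Matrix n n ℝ)) *ᵥ y = x) :
    x ⬝ᵥ y = y ⬝ᵥ (H *ᵥ y) + l * (y ⬝ᵥ y) := by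
  rw [← hy, dotProduct_comm, add_mulVec, smul_mulVec, one_mulVec, dotProduct_add,
    dotProduct_smul, smul_eq_mul]

end Matrix

theorem mul_le_div_add_of_sq_le {α a b c σ l : ℝ} (hl : 0 < l) (hσ : 0 ≤ σ) (hb : 0 ≤ b)
    (hc : 0 ≤ c) (ha : a = c + l * b) (hac : α * a ^ 2 ≤ c) (hcb : c ≤ σ * b) :
    α * a ≤ σ / (σ + l) := by
  have hσl : 0 < σ + l := by linarith
  rw [le_div_iff₀ hσl]
  rcases (show 0 ≤ a by nlinarith).eq_or_lt with rfl | ha0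
  · simpa
  refine le_of_mul_le_mul_right ?_ ha0
  calc α * a * (σ + l) * a = α * a ^ 2 * (σ + l) := by ring
    _ ≤ c * (σ + l) := mul_le_mul_of_nonneg_right hac hσl.le
    _ ≤ σ * a := by rw [ha]; nlinarith

theorem one_div_one_sub_le_one_add_div {a σ l : ℝ} (hl : 0 < l) (hσ : 0 ≤ σ)
    (ha : a ≤ σ / (σ + l)) : 1 / (1 - a) ≤ 1 + σ / l := by
  have hσl : 0 < σ + l := by linarith
  have h1a : l / (σ + l) ≤ 1 - a := by
    have : l / (σ + l) = 1 - σ / (σ + l) := by field_simp; ring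
    linarith
  calc 1 / (1 - a) ≤ 1 / (l / (σ + l)) := one_div_le_one_div_of_le (by positivity) h1a
    _ = 1 + σ / l := by field_simp; ring

theorem stmt11_general (d : ℕ) (H : Matrix (Fin d) (Fin d) ℝ) (x : Fin d → ℝ) (α l σmax : ℝ)
    (hH : H.PosSemidef) (hl : 0 < l)
    (hσ_mem : σmax ∈ spectrum ℝ H) (hσ_max : ∀ μ ∈ spectrum ℝ H, μ ≤ σmax)
    (hle : (H - α • vecMulVec x x).PosSemidef) :
    α * (x ⬝ᵥ ((H + l • (1 : Matrix (Fin d) (Fin d) ℝ))⁻¹ *ᵥ x)) ≤ σmax / (σmax + l) ∧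
    1 / (1 - α * (x ⬝ᵥ ((H + l • (1 : Matrix (Fin d) (Fin d) ℝ))⁻¹ *ᵥ x)))
      ≤ 1 + σmax / l := by
  have hσ : 0 ≤ σmax := (posSemidef_iff_isHermitian_and_spectrum_nonneg.1 hH).2 hσ_mem
  have hHl : (H + l • (1 : Matrix (Fin d) (Fin d) ℝ)).PosDef :=
    PosDef.posSemidef_add hH (PosDef.one.smul hl)
  set y := (H + l • (1 : Matrix (Fin d) (Fin d) ℝ))⁻¹ *ᵥ x
  have hy : (H + l • (1 : Matrix (Fin d) (Fin d) ℝ)) *ᵥ y = x := by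
    rw [mulVec_mulVec, mul_nonsing_inv _ ((isUnit_iff_isUnit_det _).1 hHl.isUnit), one_mulVec]
  have hbound : α * (x ⬝ᵥ y) ≤ σmax / (σmax + l) :=
    mul_le_div_add_of_sq_le hl hσ (dotProduct_self_star_nonneg y)
      (hH.dotProduct_mulVec_nonneg y) (dotProduct_eq_of_add_smul_one_mulVec_eq hy)
      (mul_sq_dotProduct_le_of_posSemidef_sub_vecMulVec hle y)
      (hH.isHermitian.dotProduct_mulVec_le_of_spectrum_le hσ_max y)
  exact ⟨hbound, one_div_one_sub_le_one_add_div hl hσ hbound⟩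

/-- If `H ⪰ 0` has largest eigenvalue `σ_max`, `λ > 0`, `H_λ = H + λI`, and
`H_w = α x xᵀ ⪯ H` with `α ≥ 0`, then `α xᵀ H_λ⁻¹ x ≤ σ_max/(σ_max + λ)` and
`1/(1 − α xᵀ H_λ⁻¹ x) ≤ 1 + σ_max/λ`. -/
theorem stmt11 (d : ℕ) (H : Matrix (Fin d) (Fin d) ℝ) (x : Fin d → ℝ) (α l σmax : ℝ)
    (hH : H.PosSemidef) (hl : 0 < l) (hα : 0 ≤ α)
    (hσ_mem : σmax ∈ spectrum ℝ H) (hσ_max : ∀ μ ∈ spectrum ℝ H, μ ≤ σmax)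
    (hle : (H - α • vecMulVec x x).PosSemidef) :
    α * (x ⬝ᵥ ((H + l • (1 : Matrix (Fin d) (Fin d) ℝ))⁻¹ *ᵥ x)) ≤ σmax / (σmax + l) ∧
    1 / (1 - α * (x ⬝ᵥ ((H + l • (1 : Matrix (Fin d) (Fin d) ℝ))⁻¹ *ᵥ x)))
      ≤ 1 + σmax / l :=
  stmt11_general d H x α l σmax hH hl hσ_mem hσ_max hle
end

section
/- Let H ≻ 0 be symmetric with 0 ⪯ H_w ⪯ H, λ > 0, H_λ = H + λI, σ_max the largest eigenvalue of H, and g ∈ ℝ^d. Define D = (I − H_λ^{-1/2} H_w H_λ^{-1/2})^{-1} − I and Λ = ½ H_λ^{1/2}(H_λ − H_w)^{-1} H_w (H_λ − H_w)^{-1} H_λ^{1/2}. Then 0 ≤ gᵀ H_λ^{-1/2}(D + Λ)H_λ^{-1/2} g ≤ (3σ_max/(2λ) + σ_max²/(2λ²)) · gᵀ H_λ^{-1} g. -/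
open Matrix

/-!
Conjugating by `H_λ^{-1/2}` cancels the square roots: with `B = H_λ - H_w`, the quadratic form is
that of `B⁻¹ - H_λ⁻¹ + ½ B⁻¹ H_w B⁻¹`. Since `B ≤ H_λ ≤ c B` for `c = (σ_max + λ)/λ`, antitonicity
of the inverse gives `H_λ⁻¹ ≤ B⁻¹ ≤ c H_λ⁻¹`, and `B⁻¹ H_w B⁻¹ = B⁻¹ H_λ B⁻¹ - B⁻¹ ≤ (c - 1) B⁻¹`.
So this matrix lies between `0` and `((c + c²)/2 - 1) H_λ⁻¹`, and `(c + c²)/2 - 1` is the stated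
constant.
-/

open scoped MatrixOrder ComplexOrder

namespace Matrix

variable {𝕜 n : Type*} [RCLike 𝕜] [Fintype n]

lemma dotProduct_mulVec_le_of_le {A B : Matrix n n 𝕜} (hAB : A ≤ B) (x : n → 𝕜) :
    star x ⬝ᵥ A *ᵥ x ≤ star x ⬝ᵥ B *ᵥ x := by
  simpa [sub_mulVec, dotProduct_sub] using (le_iff.mp hAB).dotProduct_mulVec_nonneg x

variable [DecidableEq n]

lemma PosSemidef.sqrt_mul_self {A : Matrix n n 𝕜} (hA : A.PosSemidef) :
    hA.sqrt * hA.sqrt = A := by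
  have hU : (star hA.1.eigenvectorUnitary : Matrix n n 𝕜) * hA.1.eigenvectorUnitary = 1 :=
    Unitary.star_mul_self_of_mem hA.1.eigenvectorUnitary.2
  conv_rhs => rw [hA.1.spectral_theorem, Unitary.conjStarAlgAut_apply]
  simp only [PosSemidef.sqrt, Matrix.mul_assoc]
  rw [← Matrix.mul_assoc _ _ (diagonal _ * _), hU, Matrix.one_mul,
    ← Matrix.mul_assoc (diagonal _) (diagonal _), diagonal_mul_diagonal]
  congr 3
  funext i
  simp [← RCLike.ofReal_mul, Real.mul_self_sqrt (hA.eigenvalues_nonneg i)]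

/-- Writing `A⁻¹ - B⁻¹` as a sum of two congruences transfers `A ≤ B` to the inverses without
square roots. -/
lemma inv_sub_inv_eq {R : Type*} [CommRing R] {A B : Matrix n n R} (hA : IsUnit A)
    (hB : IsUnit B) :
    A⁻¹ - B⁻¹ = B⁻¹ * (B - A) * B⁻¹ + B⁻¹ * (B - A) * A⁻¹ * (B - A) * B⁻¹ := by
  have hAdet := (isUnit_iff_isUnit_det A).mp hA
  have hBdet := (isUnit_iff_isUnit_det B).mp hB
  simp only [Matrix.mul_sub, Matrix.sub_mul, Matrix.mul_assoc, nonsing_inv_mul _ hAdet,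
    nonsing_inv_mul _ hBdet, mul_nonsing_inv _ hAdet, mul_nonsing_inv _ hBdet, Matrix.mul_one,
    Matrix.one_mul]
  abel

lemma PosDef.inv_le_inv_of_le {A B : Matrix n n 𝕜} (hA : A.PosDef) (hAB : A ≤ B) :
    B⁻¹ ≤ A⁻¹ := by
  have hB : B.PosDef := by simpa using hA.add_posSemidef hAB
  have hBinv : IsSelfAdjoint B⁻¹ := hB.inv.isHermitian
  have hD : 0 ≤ B - A := sub_nonneg.2 hAB
  rw [← sub_nonneg, inv_sub_inv_eq hA.isUnit hB.isUnit]
  refine add_nonneg (hBinv.conjugate_nonneg hD) ?_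
  simpa [star_mul, hBinv.star_eq, (IsSelfAdjoint.of_nonneg hD).star_eq, Matrix.mul_assoc] using
    star_left_conjugate_nonneg hA.inv.posSemidef.nonneg ((B - A) * B⁻¹)

lemma le_smul_one_of_spectrum_le {A : Matrix n n 𝕜} (hA : A.IsHermitian) {σ : ℝ}
    (hσ : ∀ μ ∈ spectrum ℝ A, μ ≤ σ) : A ≤ σ • 1 := by
  simpa [Algebra.algebraMap_eq_smul_one] using le_algebraMap_of_spectrum_le hσ hA.isSelfAdjoint

lemma add_smul_one_le_smul_sub {H W : Matrix n n 𝕜} {σ l : ℝ} (hl : 0 < l) (hWH : W ≤ H)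
    (hHσ : H ≤ σ • 1) (hσ : 0 ≤ σ) : H + l • 1 ≤ ((σ + l) / l) • (H + l • 1 - W) := by
  have hcl : (σ + l) / l * l = σ + l := div_mul_cancel₀ _ hl.ne'
  have key : ((σ + l) / l) • (H + l • 1 - W) - (H + l • 1) =
      ((σ + l) / l) • (H - W) + (σ • 1 - H) := by
    rw [smul_sub, smul_add, smul_smul, hcl, add_smul, smul_sub]
    abel
  rw [← sub_nonneg, key]
  exact add_nonneg (smul_nonneg (by positivity) (sub_nonneg.2 hWH)) (sub_nonneg.2 hHσ)

/-- `H_λ^{-1/2} (D + Λ) H_λ^{-1/2}` for `A = H_λ`, `W = H_w`, with the square roots cancelled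
(`inv_mul_mul_inv_eq_selfLossMatrix`). -/
noncomputable def selfLossMatrix (A W : Matrix n n 𝕜) : Matrix n n 𝕜 :=
  (A - W)⁻¹ - A⁻¹ + (1 / 2 : ℝ) • ((A - W)⁻¹ * W * (A - W)⁻¹)

lemma inv_mul_mul_inv_eq_selfLossMatrix {S A W : Matrix n n 𝕜} (hS : IsUnit S)
    (hSA : S * S = A) :
    S⁻¹ * (((1 - S⁻¹ * W * S⁻¹)⁻¹ - 1) + (1 / 2 : ℝ) • (S * (A - W)⁻¹ * W * (A - W)⁻¹ * S))
      * S⁻¹ = selfLossMatrix A W := by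
  have hSdet := (isUnit_iff_isUnit_det S).mp hS
  have hwhite : 1 - S⁻¹ * W * S⁻¹ = S⁻¹ * (A - W) * S⁻¹ := by
    simp only [Matrix.mul_sub, Matrix.sub_mul, ← hSA, Matrix.mul_assoc,
      nonsing_inv_mul_cancel_left _ _ hSdet, mul_nonsing_inv _ hSdet]
  rw [hwhite, Matrix.mul_inv_rev, Matrix.mul_inv_rev, nonsing_inv_nonsing_inv _ hSdet,
    selfLossMatrix, ← hSA, Matrix.mul_inv_rev]
  simp only [Matrix.mul_add, Matrix.add_mul, Matrix.mul_sub, Matrix.sub_mul, Matrix.mul_smul,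
    Matrix.smul_mul, Matrix.mul_assoc, nonsing_inv_mul_cancel_left _ _ hSdet,
    mul_nonsing_inv _ hSdet, Matrix.mul_one]

variable {A W : Matrix n n 𝕜}

lemma selfLossMatrix_nonneg (hAW : (A - W).PosDef) (hW : 0 ≤ W) : 0 ≤ selfLossMatrix A W := by
  have hinv : 0 ≤ (A - W)⁻¹ * W * (A - W)⁻¹ :=
    hAW.inv.isHermitian.isSelfAdjoint.conjugate_nonneg hW
  exact add_nonneg (sub_nonneg.2 (hAW.inv_le_inv_of_le (sub_le_self A hW)))
    (smul_nonneg (by norm_num) hinv)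

lemma selfLossMatrix_le (hAW : (A - W).PosDef) (hW : 0 ≤ W) {c : ℝ} (hc : 0 < c)
    (hAc : A ≤ c • (A - W)) : selfLossMatrix A W ≤ ((c + c ^ 2) / 2 - 1) • A⁻¹ := by
  set B := A - W
  have hBinv : IsSelfAdjoint B⁻¹ := hAW.inv.isHermitian
  have hBdet := (isUnit_iff_isUnit_det B).mp hAW.isUnit
  have hA : A.PosDef := by simpa [B] using hAW.add_posSemidef hW.posSemidef
  have hWconj : B⁻¹ * W * B⁻¹ ≤ (c - 1) • B⁻¹ := by
    have hWB : W = A - B := by simp [B]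
    have := hBinv.conjugate_le_conjugate hAc
    rw [Matrix.mul_smul, Matrix.smul_mul, nonsing_inv_mul _ hBdet, Matrix.one_mul] at this
    rw [hWB, Matrix.mul_sub, Matrix.sub_mul, nonsing_inv_mul _ hBdet, Matrix.one_mul, sub_smul,
      one_smul]
    exact sub_le_sub_right this _
  have hBinv_le : B⁻¹ ≤ c • A⁻¹ := by
    have hinv : (c • B)⁻¹ = c⁻¹ • B⁻¹ := inv_eq_left_inv <| by
      rw [smul_mul_smul_comm, inv_mul_cancel₀ hc.ne', nonsing_inv_mul _ hBdet, one_smul]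
    have := smul_le_smul_of_nonneg_left (hA.inv_le_inv_of_le hAc) hc.le
    rwa [hinv, smul_smul, mul_inv_cancel₀ hc.ne', one_smul] at this
  calc selfLossMatrix A W
      ≤ B⁻¹ - A⁻¹ + (1 / 2 : ℝ) • ((c - 1) • B⁻¹) := by
        unfold selfLossMatrix
        gcongr
    _ = ((1 + c) / 2) • B⁻¹ - A⁻¹ := by module
    _ ≤ ((1 + c) / 2) • (c • A⁻¹) - A⁻¹ := by gcongr
    _ = ((c + c ^ 2) / 2 - 1) • A⁻¹ := by module

end Matrix

/-- Self-loss quadratic-form bound: with `0 ⪯ H_w ⪯ H`, `λ > 0`, `H_λ = H + λI`, `σ_max`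
the largest eigenvalue of `H`, `D = (I − H_λ⁻¹ᐟ² H_w H_λ⁻¹ᐟ²)⁻¹ − I` and
`Λ = ½ H_λ¹ᐟ² (H_λ − H_w)⁻¹ H_w (H_λ − H_w)⁻¹ H_λ¹ᐟ²`, we have
`0 ≤ gᵀ H_λ⁻¹ᐟ² (D + Λ) H_λ⁻¹ᐟ² g ≤ (3σ_max/(2λ) + σ_max²/(2λ²)) gᵀ H_λ⁻¹ g`. -/
theorem stmt12 (d : ℕ) (H Hw : Matrix (Fin d) (Fin d) ℝ) (l σmax : ℝ) (g : Fin d → ℝ)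
    (hH : H.PosSemidef) (hHw : Hw.PosSemidef) (hle : (H - Hw).PosSemidef)
    (hl : 0 < l)
    (hP : (H + l • (1 : Matrix (Fin d) (Fin d) ℝ)).PosSemidef)
    (hσ_mem : σmax ∈ spectrum ℝ H) (hσ_max : ∀ μ ∈ spectrum ℝ H, μ ≤ σmax) :
    0 ≤ g ⬝ᵥ ((hP.sqrt⁻¹ *
          (((1 - hP.sqrt⁻¹ * Hw * hP.sqrt⁻¹)⁻¹ - 1)
            + (1 / 2 : ℝ) • (hP.sqrt *
                ((H + l • (1 : Matrix (Fin d) (Fin d) ℝ)) - Hw)⁻¹ * Hw *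
                ((H + l • (1 : Matrix (Fin d) (Fin d) ℝ)) - Hw)⁻¹ * hP.sqrt))
          * hP.sqrt⁻¹) *ᵥ g) ∧
    g ⬝ᵥ ((hP.sqrt⁻¹ *
          (((1 - hP.sqrt⁻¹ * Hw * hP.sqrt⁻¹)⁻¹ - 1)
            + (1 / 2 : ℝ) • (hP.sqrt *
                ((H + l • (1 : Matrix (Fin d) (Fin d) ℝ)) - Hw)⁻¹ * Hw *
                ((H + l • (1 : Matrix (Fin d) (Fin d) ℝ)) - Hw)⁻¹ * hP.sqrt))
          * hP.sqrt⁻¹) *ᵥ g)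
      ≤ (3 * σmax / (2 * l) + σmax ^ 2 / (2 * l ^ 2)) *
          (g ⬝ᵥ ((H + l • (1 : Matrix (Fin d) (Fin d) ℝ))⁻¹ *ᵥ g)) := by
  have hσ : 0 ≤ σmax := spectrum_nonneg_of_nonneg hH.nonneg hσ_mem
  have hlI : (l • (1 : Matrix (Fin d) (Fin d) ℝ)).PosDef := PosDef.one.smul hl
  have hHl : (H + l • 1).PosDef := PosDef.posSemidef_add hH hlI
  have hB : (H + l • 1 - Hw).PosDef := by
    simpa only [sub_add_eq_add_sub] using PosDef.posSemidef_add hle hlI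
  have hS : IsUnit hP.sqrt := isUnit_of_mul_isUnit_left (hP.sqrt_mul_self ▸ hHl.isUnit)
  have hHl_le : H + l • 1 ≤ ((σmax + l) / l) • (H + l • 1 - Hw) :=
    add_smul_one_le_smul_sub hl (sub_nonneg.1 hle.nonneg)
      (le_smul_one_of_spectrum_le hH.1 hσ_max) hσ
  have hconst : 3 * σmax / (2 * l) + σmax ^ 2 / (2 * l ^ 2) =
      ((σmax + l) / l + ((σmax + l) / l) ^ 2) / 2 - 1 := by
    field_simp
    ring
  rw [inv_mul_mul_inv_eq_selfLossMatrix hS hP.sqrt_mul_self, hconst]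
  constructor
  · simpa using dotProduct_mulVec_le_of_le (selfLossMatrix_nonneg hB hHw.nonneg) g
  · simpa [smul_mulVec] using dotProduct_mulVec_le_of_le
      (selfLossMatrix_le hB hHw.nonneg (by positivity) hHl_le) g
end
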